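/- Let (X,r) be a non-degenerate involutive set-theoretic solution to the Yang–Baxter equation, and k: X → X a map. Write k_2 = id×k and r(x,y) = (σ_x(y), τ_y(x)). If k_2 ∘ r = r ∘ k_2, then k = id. -/
import Mathlib


/-- `r × id` acting on triples. -/
def r1map {X : Type*} (r : X × X → X × X) : X × X × X → X × X × X :=
  fun p => ((r (p.1, p.2.1)).1, (r (p.1, p.2.1)).2, p.2.2)

/-- `id × r` acting on triples. -/
def r2map {X : Type*} (r : X × X → X × X) : X × X × X → X × X × X :=
  fun p => (p.1, r p.2)

/-- `id × k` on pairs. -/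
def k2map {X : Type*} (k : X → X) : X × X → X × X := fun p => (p.1, k p.2)

/-- `k × id` on pairs. -/
def k1map {X : Type*} (k : X → X) : X × X → X × X := fun p => (k p.1, p.2)

/-- Proposition: for a non-degenerate involutive solution, k₂r = rk₂ implies k = id. -/
theorem statement10 {X : Type*} (σ τ : X → X ≃ X) (k : X → X)
    (r : X × X → X × X) (hr : ∀ x y, r (x, y) = (σ x y, τ y x))
    (hbraid : r1map r ∘ r2map r ∘ r1map r = r2map r ∘ r1map r ∘ r2map r)
    (hinv : r ∘ r = id)
    (h : k2map k ∘ r = r ∘ k2map k) :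
    k = id := by
  funext y
  have := congrFun h (y, y)
  simp only [Function.comp_apply, k2map, hr] at this
  have h1 : σ y y = σ y (k y) := congrArg Prod.fst this
  exact ((σ y).injective h1.symm).trans rfl
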